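/- Let M be a set and φ(x; y) a relation on M admitting a strong honest definition ψ(x; y₁, …, y_k): for every finite B ⊆ M^y with |B| ≥ 2 and every a ∈ M^x, there exist b₁, …, b_k ∈ B with ψ(a; b₁, …, b_k) and ψ(M^x; b₁,…,b_k) ⊆ tp_φ(a/B). Then for every finite B ⊆ M^y with |B| ≥ 2, the number of φ-types over B satisfies |S_φ(B)| ≤ |B|^k. -/
import Mathlib


theorem stmt_12 {α β : Type*} (k : ℕ) (φ : α → β → Prop)
    (ψ : α → (Fin k → β) → Prop)
    (hshd : ∀ B : Finset β, 2 ≤ B.card → ∀ a : α,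
      ∃ b : Fin k → β, (∀ i, b i ∈ B) ∧ ψ a b ∧
        ∀ a' : α, ψ a' b → ∀ y ∈ B, (φ a' y ↔ φ a y)) :
    ∀ B : Finset β, 2 ≤ B.card →
      Set.Finite {S : Set α | ∃ a : α, S = {a' | ∀ y ∈ B, (φ a' y ↔ φ a y)}} ∧
      Set.ncard {S : Set α | ∃ a : α, S = {a' | ∀ y ∈ B, (φ a' y ↔ φ a y)}}
        ≤ B.card ^ k := by
  classical
  intro B hB
  set T : Set (Set α) := {S : Set α | ∃ a : α, S = {a' | ∀ y ∈ B, (φ a' y ↔ φ a y)}} with hT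
  -- property relating a type S to a tuple b
  set P : Set α → (Fin k → β) → Prop := fun S b =>
    (∀ i, b i ∈ B) ∧ ∃ a : α, S = {a' | ∀ y ∈ B, (φ a' y ↔ φ a y)} ∧ ψ a b ∧
      (∀ a' : α, ψ a' b → ∀ y ∈ B, (φ a' y ↔ φ a y)) with hP
  have hex : ∀ S ∈ T, ∃ b, P S b := by
    rintro S ⟨a, rfl⟩
    obtain ⟨b, hbB, hψ, hcov⟩ := hshd B hB a
    exact ⟨b, hbB, a, rfl, hψ, hcov⟩
  have hinj : ∀ S ∈ T, ∀ S' ∈ T, ∀ b, P S b → P S' b → S = S' := by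
    rintro S _ S' _ b ⟨_, a, rfl, hψ, hcov⟩ ⟨_, a', rfl, hψ', hcov'⟩
    have haa' : ∀ y ∈ B, (φ a' y ↔ φ a y) := hcov a' hψ'
    ext a''
    simp only [Set.mem_setOf_eq]
    constructor
    · intro h y hy; rw [h y hy]; exact (haa' y hy).symm
    · intro h y hy; rw [h y hy]; exact haa' y hy
  obtain ⟨y0, hy0⟩ := Finset.card_pos.mp (by omega : 0 < B.card)
  have : Nonempty β := ⟨y0⟩
  choose! f hf using hex
  have hinjOn : Set.InjOn f T := fun S hS S' hS' h => by
    exact hinj S hS S' hS' (f S) (hf S hS) (h ▸ hf S' hS')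
  have himg : f '' T ⊆ ↑(Fintype.piFinset (fun _ : Fin k => B)) := by
    rintro _ ⟨S, hS, rfl⟩
    simp only [Finset.coe_sort_coe, Finset.mem_coe, Fintype.mem_piFinset]
    exact (hf S hS).1
  have hfin' : (f '' T).Finite := Set.Finite.subset (Finset.finite_toSet _) himg
  have hfinT : T.Finite := Set.Finite.of_finite_image hfin' hinjOn
  refine ⟨hfinT, ?_⟩
  calc T.ncard = (f '' T).ncard := (Set.ncard_image_of_injOn hinjOn).symm
    _ ≤ (↑(Fintype.piFinset (fun _ : Fin k => B)) : Set (Fin k → β)).ncard :=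
        Set.ncard_le_ncard himg (Finset.finite_toSet _)
    _ = (Fintype.piFinset (fun _ : Fin k => B)).card := Set.ncard_coe_finset _
    _ = B.card ^ k := by simp [Fintype.card_piFinset]
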